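/- Let V : D → ℝ be continuous, continuously differentiable in (t,r) and twice continuously differentiable in x, and suppose |V(t,r,x)| ≤ L(T+1) on D and V(t,r,x) = V(t,δ,x) for all (t,x) ∈ [0,T]×ℝⁿ and r ∈ [δ,T]. Write V⁰(t,x) = V(t,δ,x). Then the following are equivalent. (a) [Coupled system (HJB1)–(HJB2)]: V_t(t,r,x) + V_r(t,r,x) + H(t,x,V_x(t,r,x),V_xx(t,r,x)) = 0 for all (t,r,x) ∈ [0,T)×[0,δ)×ℝⁿ; V(T,r,x) = min{ h(x), inf_{ξ∈K}[h(x+ξ) + ℓ(T,ξ)] } for all (r,x) ∈ [0,δ)×ℝⁿ; min{ V⁰_t(t,x) + H(t,x,V⁰_x(t,x),V⁰_xx(t,x)), N[V](t,0,x) − V⁰(t,x) } = 0 for all (t,x) ∈ [0,T)×ℝⁿ; and V⁰(T,x) = min{ h(x), inf_{ξ∈K}[h(x+ξ) + ℓ(T,ξ)] } for all x ∈ ℝⁿ. (b) [Single equation (HJB3)]: min{ V_t(t,r,x) + V_r(t,r,x) + H(t,x,V_x(t,r,x),V_xx(t,r,x)), N̂[V](t,r,x) − V(t,r,x) } = 0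 for all (t,r,x) ∈ [0,T)×[0,T)×ℝⁿ; and V(T,r,x) = min{ h(x), inf_{ξ∈K}[h(x+ξ) + ℓ(T,ξ)] } for all (r,x) ∈ [0,T]×ℝⁿ. -/
import Mathlib


open Set Matrix

open scoped RealInnerProductSpace

/-- Frobenius norm of a real matrix. -/
noncomputable def frobNorm (n d : ℕ) (A : Matrix (Fin n) (Fin d) ℝ) : ℝ :=
  Real.sqrt (∑ i, ∑ j, (A i j) ^ 2)

/-- The Hamiltonian `H(t,x,p,P) = ⟨b(t,x),p⟩ + (1/2) tr(σ(t,x)ᵀ P σ(t,x)) + g(t,x)`. -/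
noncomputable def Ham (n d : ℕ)
    (b : ℝ → EuclideanSpace ℝ (Fin n) → EuclideanSpace ℝ (Fin n))
    (σ : ℝ → EuclideanSpace ℝ (Fin n) → Matrix (Fin n) (Fin d) ℝ)
    (g : ℝ → EuclideanSpace ℝ (Fin n) → ℝ)
    (t : ℝ) (x p : EuclideanSpace ℝ (Fin n)) (P : Matrix (Fin n) (Fin n) ℝ) : ℝ :=
  ⟪b t x, p⟫ + (1/2) * ((σ t x)ᵀ * P * σ t x).trace + g t x

/-- The intervention operator `N[V](t,0,x) = inf_{ξ ∈ K} [V(t,0,x+ξ) + ℓ(t,ξ)]`. -/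
noncomputable def Nop (n : ℕ) (K : Set (EuclideanSpace ℝ (Fin n)))
    (ℓ : ℝ → EuclideanSpace ℝ (Fin n) → ℝ)
    (V : ℝ → ℝ → EuclideanSpace ℝ (Fin n) → ℝ)
    (t : ℝ) (x : EuclideanSpace ℝ (Fin n)) : ℝ :=
  sInf {y : ℝ | ∃ ξ ∈ K, y = V t 0 (x + ξ) + ℓ t ξ}

/-- The modified obstacle `N̂[V](t,r,x)`: equals `N[V](t,0,x)` for `r ≥ δ` and
`2L(T+1)` for `r < δ`. -/
noncomputable def Nhat (n : ℕ) (T δ L : ℝ) (K : Set (EuclideanSpace ℝ (Fin n)))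
    (ℓ : ℝ → EuclideanSpace ℝ (Fin n) → ℝ)
    (V : ℝ → ℝ → EuclideanSpace ℝ (Fin n) → ℝ)
    (t r : ℝ) (x : EuclideanSpace ℝ (Fin n)) : ℝ :=
  if δ ≤ r then Nop n K ℓ V t x else 2 * L * (T + 1)

/-- The domain `D = [0,T] × [0,T] × ℝⁿ`. -/
def Dom (n : ℕ) (T : ℝ) : Set (ℝ × ℝ × EuclideanSpace ℝ (Fin n)) :=
  Icc 0 T ×ˢ Icc 0 T ×ˢ univ

/-- The terminal value `min{h(x), inf_{ξ∈K}[h(x+ξ) + ℓ(T,ξ)]}`. -/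
noncomputable def termVal (n : ℕ) (T : ℝ) (K : Set (EuclideanSpace ℝ (Fin n)))
    (h : EuclideanSpace ℝ (Fin n) → ℝ) (ℓ : ℝ → EuclideanSpace ℝ (Fin n) → ℝ)
    (x : EuclideanSpace ℝ (Fin n)) : ℝ :=
  min (h x) (sInf {y : ℝ | ∃ ξ ∈ K, y = h (x + ξ) + ℓ T ξ})


/-- For a smooth `V` (C¹ in `(t,r)`, C² in `x`) that is bounded by
`L(T+1)` and constant in `r` on `[δ,T]`, the coupled HJB system (HJB1)-(HJB2) is
equivalent to the single equation (HJB3). -/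
theorem stmt_11
    (n d : ℕ) (hn : 1 ≤ n) (hd : 1 ≤ d) (T δ L ℓ₀ α : ℝ)
    (hT : 0 < T) (hδ : 0 < δ) (hδT : δ < T) (hL : 0 < L)
    (hℓ₀ : 0 < ℓ₀) (hα : 0 < α)
    (K : Set (EuclideanSpace ℝ (Fin n))) (hKne : K.Nonempty) (hKcl : IsClosed K)
    (hKconv : Convex ℝ K) (hKcone : ∀ c : ℝ, 0 ≤ c → ∀ x ∈ K, c • x ∈ K)
    (b : ℝ → EuclideanSpace ℝ (Fin n) → EuclideanSpace ℝ (Fin n))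
    (σ : ℝ → EuclideanSpace ℝ (Fin n) → Matrix (Fin n) (Fin d) ℝ)
    (g : ℝ → EuclideanSpace ℝ (Fin n) → ℝ)
    (h : EuclideanSpace ℝ (Fin n) → ℝ)
    (ℓ : ℝ → EuclideanSpace ℝ (Fin n) → ℝ)
    (hbcont : ContinuousOn (fun p : ℝ × EuclideanSpace ℝ (Fin n) => b p.1 p.2)
      (Icc (0:ℝ) T ×ˢ (univ : Set (EuclideanSpace ℝ (Fin n)))))
    (hσcont : ContinuousOn (fun p : ℝ × EuclideanSpace ℝ (Fin n) => σ p.1 p.2)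
      (Icc (0:ℝ) T ×ˢ (univ : Set (EuclideanSpace ℝ (Fin n)))))
    (hgcont : ContinuousOn (fun p : ℝ × EuclideanSpace ℝ (Fin n) => g p.1 p.2)
      (Icc (0:ℝ) T ×ˢ (univ : Set (EuclideanSpace ℝ (Fin n)))))
    (hhcont : Continuous h)
    (hℓcont : ContinuousOn (fun p : ℝ × EuclideanSpace ℝ (Fin n) => ℓ p.1 p.2)
      (Icc (0:ℝ) T ×ˢ K))
    (hH1lip : ∀ t ∈ Icc (0:ℝ) T, ∀ x xh : EuclideanSpace ℝ (Fin n),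
      ‖b t x - b t xh‖ + frobNorm n d (σ t x - σ t xh) ≤ L * ‖x - xh‖)
    (hH1bdd : ∀ t ∈ Icc (0:ℝ) T, ∀ x : EuclideanSpace ℝ (Fin n),
      ‖b t x‖ + frobNorm n d (σ t x) ≤ L)
    (hH2lip : ∀ t ∈ Icc (0:ℝ) T, ∀ x xh : EuclideanSpace ℝ (Fin n),
      |g t x - g t xh| + |h x - h xh| ≤ L * ‖x - xh‖)
    (hH2bdd : ∀ t ∈ Icc (0:ℝ) T, ∀ x : EuclideanSpace ℝ (Fin n), |g t x| + |h x| ≤ L)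
    (hℓpos : ∀ t ∈ Icc (0:ℝ) T, ∀ ξ ∈ K, 0 < ℓ t ξ)
    (hℓsubadd : ∀ t ∈ Icc (0:ℝ) T, ∀ ξ ∈ K, ∀ ξh ∈ K, ℓ t (ξ + ξh) < ℓ t ξ + ℓ t ξh)
    (hℓmono : ∀ t ∈ Icc (0:ℝ) T, ∀ th ∈ Icc (0:ℝ) T, t ≤ th → ∀ ξ ∈ K, ℓ th ξ ≤ ℓ t ξ)
    (hℓcoer : ∀ t ∈ Icc (0:ℝ) T, ∀ ξ ∈ K, ℓ₀ + α * ‖ξ‖ ≤ ℓ t ξ)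
    (V Vt Vr : ℝ → ℝ → EuclideanSpace ℝ (Fin n) → ℝ)
    (Vx : ℝ → ℝ → EuclideanSpace ℝ (Fin n) → EuclideanSpace ℝ (Fin n))
    (Vxx : ℝ → ℝ → EuclideanSpace ℝ (Fin n) → Matrix (Fin n) (Fin n) ℝ)
    (hVcont : Continuous fun p : ℝ × ℝ × EuclideanSpace ℝ (Fin n) => V p.1 p.2.1 p.2.2)
    (hVt : ∀ t r x, HasDerivAt (fun s => V s r x) (Vt t r x) t)
    (hVr : ∀ t r x, HasDerivAt (fun s => V t s x) (Vr t r x) r)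
    (hVx : ∀ t r x, HasGradientAt (fun y => V t r y) (Vx t r x) x)
    (hVxx : ∀ t r x, HasFDerivAt (fun y => Vx t r y)
      (LinearMap.toContinuousLinearMap (Matrix.toEuclideanLin (Vxx t r x))) x)
    (hVtcont : Continuous fun p : ℝ × ℝ × EuclideanSpace ℝ (Fin n) => Vt p.1 p.2.1 p.2.2)
    (hVrcont : Continuous fun p : ℝ × ℝ × EuclideanSpace ℝ (Fin n) => Vr p.1 p.2.1 p.2.2)
    (hVxcont : Continuous fun p : ℝ × ℝ × EuclideanSpace ℝ (Fin n) => Vx p.1 p.2.1 p.2.2)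
    (hVxxcont : Continuous fun p : ℝ × ℝ × EuclideanSpace ℝ (Fin n) => Vxx p.1 p.2.1 p.2.2)
    (hVbd : ∀ t ∈ Icc (0:ℝ) T, ∀ r ∈ Icc (0:ℝ) T, ∀ x, |V t r x| ≤ L * (T + 1))
    (hVflat : ∀ t r x, δ ≤ r → r ≤ T → V t r x = V t δ x) :
    -- (a) the coupled system (HJB1)–(HJB2) …
    ((∀ t ∈ Ico (0:ℝ) T, ∀ r ∈ Ico (0:ℝ) δ, ∀ x : EuclideanSpace ℝ (Fin n),
        Vt t r x + Vr t r x + Ham n d b σ g t x (Vx t r x) (Vxx t r x) = 0) ∧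
      (∀ r ∈ Ico (0:ℝ) δ, ∀ x : EuclideanSpace ℝ (Fin n),
        V T r x = termVal n T K h ℓ x) ∧
      (∀ t ∈ Ico (0:ℝ) T, ∀ x : EuclideanSpace ℝ (Fin n),
        min (Vt t δ x + Ham n d b σ g t x (Vx t δ x) (Vxx t δ x))
          (Nop n K ℓ V t x - V t δ x) = 0) ∧
      (∀ x : EuclideanSpace ℝ (Fin n), V T δ x = termVal n T K h ℓ x))
    ↔
    -- (b) … is equivalent to the single equation (HJB3)
    ((∀ t ∈ Ico (0:ℝ) T, ∀ r ∈ Ico (0:ℝ) T, ∀ x : EuclideanSpace ℝ (Fin n),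
        min (Vt t r x + Vr t r x + Ham n d b σ g t x (Vx t r x) (Vxx t r x))
          (Nhat n T δ L K ℓ V t r x - V t r x) = 0) ∧
      (∀ r ∈ Icc (0:ℝ) T, ∀ x : EuclideanSpace ℝ (Fin n),
        V T r x = termVal n T K h ℓ x)) := by

  -- Derived facts about the derivatives of `V` in the flat region `r ∈ [δ,T]`.
  have hVr0 : ∀ t r x, δ ≤ r → r < T → Vr t r x = 0 := by
    intro t r x hr1 hr2
    have h1 : HasDerivWithinAt (fun s => V t s x) (Vr t r x) (Icc r T) r :=
      (hVr t r x).hasDerivWithinAt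
    have h2 : HasDerivWithinAt (fun s => V t s x) 0 (Icc r T) r := by
      refine (hasDerivWithinAt_const r (Icc r T) (V t δ x)).congr ?_ ?_
      · exact fun s hs => hVflat t s x (le_trans hr1 hs.1) hs.2
      · exact hVflat t r x hr1 hr2.le
    exact UniqueDiffWithinAt.eq_deriv _ ((uniqueDiffOn_Icc hr2) r ⟨le_refl r, hr2.le⟩) h1 h2
  have hVteq : ∀ t r x, δ ≤ r → r ≤ T → Vt t r x = Vt t δ x := by
    intro t r x h1 h2
    have he : (fun s => V s r x) = fun s => V s δ x := funext fun s => hVflat s r x h1 h2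
    have h' := hVt t δ x
    rw [← he] at h'
    exact (hVt t r x).unique h'
  have hVxeq : ∀ t r x, δ ≤ r → r ≤ T → Vx t r x = Vx t δ x := by
    intro t r x h1 h2
    have he : (fun y => V t r y) = fun y => V t δ y := funext fun y => hVflat t r y h1 h2
    have h' := hVx t δ x
    rw [← he] at h'
    exact (hVx t r x).unique h'
  have hVxxeq : ∀ t r x, δ ≤ r → r ≤ T → Vxx t r x = Vxx t δ x := by
    intro t r x h1 h2
    have he : (fun y => Vx t r y) = fun y => Vx t δ y :=
      funext fun y => hVxeq t r y h1 h2
    have h' := hVxx t δ x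
    rw [← he] at h'
    have := (hVxx t r x).unique h'
    exact Matrix.toEuclideanLin.injective (LinearMap.toContinuousLinearMap.injective this)
  have hLT1 : 0 < L * (T + 1) := by positivity
  constructor
  · rintro ⟨ha1, ha2, ha3, ha4⟩
    constructor
    · intro t ht r hr x
      by_cases hrδ : r < δ
      · -- below δ : obstacle is `2L(T+1)`, strictly above `V`; PDE holds by (HJB1)
        have hA : Vt t r x + Vr t r x + Ham n d b σ g t x (Vx t r x) (Vxx t r x) = 0 :=
          ha1 t ht r ⟨hr.1, hrδ⟩ x
        have hB : 0 < Nhat n T δ L K ℓ V t r x - V t r x := by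
          rw [Nhat, if_neg (not_le.mpr hrδ)]
          have := hVbd t ⟨ht.1, ht.2.le⟩ r ⟨hr.1, hr.2.le⟩ x
          have := abs_le.mp this
          nlinarith
        rw [hA, min_eq_left hB.le]
      · -- above δ : `V` is flat in `r`, reduce to (HJB2)
        push_neg at hrδ
        have hVr' : Vr t r x = 0 := hVr0 t r x hrδ hr.2
        have hmin := ha3 t ht x
        rw [hVr', hVteq t r x hrδ hr.2.le, hVxeq t r x hrδ hr.2.le,
          hVxxeq t r x hrδ hr.2.le, Nhat, if_pos hrδ, hVflat t r x hrδ hr.2.le]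
        simpa using hmin
    · intro r hr x
      by_cases hrδ : r < δ
      · exact ha2 r ⟨hr.1, hrδ⟩ x
      · push_neg at hrδ
        rw [hVflat T r x hrδ hr.2]
        exact ha4 x
  · rintro ⟨hb1, hb2⟩
    have hδmem : δ ∈ Ico (0:ℝ) T := ⟨hδ.le, hδT⟩
    refine ⟨?_, ?_, ?_, ?_⟩
    · intro t ht r hr x
      have hmin := hb1 t ht r ⟨hr.1, hr.2.trans hδT⟩ x
      have hB : 0 < Nhat n T δ L K ℓ V t r x - V t r x := by
        rw [Nhat, if_neg (not_le.mpr hr.2)]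
        have := abs_le.mp (hVbd t ⟨ht.1, ht.2.le⟩ r ⟨hr.1, (hr.2.trans hδT).le⟩ x)
        nlinarith
      rcases min_cases (Vt t r x + Vr t r x + Ham n d b σ g t x (Vx t r x) (Vxx t r x))
          (Nhat n T δ L K ℓ V t r x - V t r x) with hc | hc
      · rw [hc.1] at hmin; exact hmin
      · rw [hc.1] at hmin; linarith
    · intro r hr x
      exact hb2 r ⟨hr.1, (hr.2.trans hδT).le⟩ x
    · intro t ht x
      have hmin := hb1 t ht δ hδmem x
      have hVr' : Vr t δ x = 0 := hVr0 t δ x le_rfl hδT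
      rw [hVr', Nhat, if_pos le_rfl] at hmin
      simpa using hmin
    · intro x; exact hb2 δ ⟨hδ.le, hδT.le⟩ x
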